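/- (Perturb-and-Average Scoring equals expected score) Let y₁, …, y_N ∈ ℝ^d, σ > 0, define p_σ(x) = (1/N) Σ_{i=1}^N N(x; y_i, σ²I_d) and the optimal denoiser D(x; σ) = (Σ_i N(x; y_i, σ²I_d) y_i)/(Σ_i N(x; y_i, σ²I_d)). Then for every x ∈ ℝ^d, ∫_{ℝ^d} ((D(x + σn; σ) − (x + σn))/σ²) · N(n; 0, I_d) dn = ∫_{ℝ^d} ∇ log p_σ(x + σn) · N(n; 0, I_d) dn; in particular this expectation equals the gradient with respect to x of the lower bound ∫ log p_σ(x + σn) N(n; 0, I_d) dn on log p_{√2·σ}(x). -/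

import Mathlib

open MeasureTheory

/-- The isotropic Gaussian density `N(x; μ, σ²I_d)` on `ℝ^d`. -/
noncomputable def gaussPdf (d : ℕ) (σ : ℝ) (μ x : EuclideanSpace ℝ (Fin d)) : ℝ :=
  (2 * Real.pi * σ ^ 2) ^ (-(d : ℝ) / 2) * Real.exp (-‖x - μ‖ ^ 2 / (2 * σ ^ 2))

/-- The noised empirical density `p_σ(x) = (1/N) Σᵢ N(x; yᵢ, σ²I_d)`. -/
noncomputable def noisedDensity (d N : ℕ) (y : Fin N → EuclideanSpace ℝ (Fin d)) (σ : ℝ)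
    (x : EuclideanSpace ℝ (Fin d)) : ℝ :=
  (1 / N) * ∑ i, gaussPdf d σ (y i) x

/-- The optimal denoiser `D(x; σ)`, the Gaussian-kernel weighted mean of the data points. -/
noncomputable def denoiser (d N : ℕ) (y : Fin N → EuclideanSpace ℝ (Fin d)) (σ : ℝ)
    (x : EuclideanSpace ℝ (Fin d)) : EuclideanSpace ℝ (Fin d) :=
  (∑ i, gaussPdf d σ (y i) x)⁻¹ • ∑ i, gaussPdf d σ (y i) x • y i


/-!
The density `p_σ` is a mixture of Gaussians, and
`∇ N(z; yᵢ, σ²I) = N(z; yᵢ, σ²I) (yᵢ - z) / σ²`; dividing by `p_σ` turns the mixture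
weights into the weights of the denoiser, so `∇ log p_σ(z) = (D(z; σ) - z) / σ²`
(Tweedie's formula) and the first identity holds pointwise.
For the second one differentiates under the integral sign: `log p_σ` grows at most
quadratically and its gradient at most linearly (`D` stays in the convex hull of the data),
which the second moment of the standard Gaussian dominates.
-/

open InnerProductSpace Real Metric

lemma norm_add_sq_le_two_mul {G : Type*} [SeminormedAddGroup G] (u v : G) :
    ‖u + v‖ ^ 2 ≤ 2 * ‖u‖ ^ 2 + 2 * ‖v‖ ^ 2 := by
  nlinarith [norm_add_le u v, norm_nonneg (u + v), sq_nonneg (‖u‖ - ‖v‖)]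

lemma abs_comp_add_smul_le {V : Type*} [SeminormedAddCommGroup V] [NormedSpace ℝ V]
    {f : V → ℝ} {a b : ℝ} (hf : ∀ z, |f z| ≤ a + b * ‖z‖ ^ 2) (x n : V) (σ : ℝ) :
    |f (x + σ • n)| ≤ (|a| + 2 * |b| * ‖x‖ ^ 2) + 2 * |b| * σ ^ 2 * ‖n‖ ^ 2 := by
  have hsq := norm_add_sq_le_two_mul x (σ • n)
  rw [norm_smul, mul_pow, Real.norm_eq_abs, sq_abs] at hsq
  nlinarith [hf (x + σ • n), le_abs_self a, le_abs_self b, abs_nonneg b,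
    sq_nonneg ‖x + σ • n‖]

lemma norm_comp_add_smul_le {V W : Type*} [SeminormedAddCommGroup V] [NormedSpace ℝ V]
    [SeminormedAddCommGroup W] {g : V → W} {a b : ℝ} (hg : ∀ z, ‖g z‖ ≤ a + b * ‖z‖)
    {x x' : V} (hx' : x' ∈ ball x 1) (n : V) (σ : ℝ) :
    ‖g (x' + σ • n)‖ ≤ (|a| + |b| * (‖x‖ + 1)) + |b| * |σ| * ‖n‖ := by
  have hx'_le : ‖x'‖ ≤ ‖x‖ + 1 := by
    linarith [norm_le_norm_add_norm_sub' x' x, mem_ball_iff_norm.1 hx']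
  have hnorm : ‖x' + σ • n‖ ≤ ‖x‖ + 1 + |σ| * ‖n‖ := by
    have := norm_add_le x' (σ • n)
    rw [norm_smul, Real.norm_eq_abs] at this
    linarith
  nlinarith [hg (x' + σ • n), le_abs_self a, le_abs_self b, abs_nonneg b,
    norm_nonneg (x' + σ • n)]

lemma MeasureTheory.Integrable.norm_mul_of_sq_norm_mul {α : Type*} [NormedAddCommGroup α]
    [MeasurableSpace α] [OpensMeasurableSpace α] {μ : Measure α} {φ : α → ℝ}
    (hφ : Integrable φ μ) (hφ₂ : Integrable (fun n => ‖n‖ ^ 2 * φ n) μ) :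
    Integrable (fun n => ‖n‖ * φ n) μ := by
  refine (hφ.norm.add hφ₂.norm).mono' (continuous_norm.aestronglyMeasurable.mul hφ.1)
    (ae_of_all _ fun n => ?_)
  simp only [norm_mul, norm_norm, norm_pow, Pi.add_apply]
  nlinarith [norm_nonneg (φ n), sq_nonneg (‖n‖ - 1)]

section ParametricIntegral

variable {E : Type*} [NormedAddCommGroup E] [InnerProductSpace ℝ E] [CompleteSpace E]
  [SecondCountableTopology E] [MeasurableSpace E] [BorelSpace E] {μ : Measure E} {φ : E → ℝ}

theorem hasGradientAt_integral_comp_add_smul_mul {f : E → ℝ} {g : E → E} (σ : ℝ) (x : E)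
    (hfg : ∀ z, HasGradientAt f (g z) z) (hg : Continuous g)
    (hf_le : ∃ a b, ∀ z, |f z| ≤ a + b * ‖z‖ ^ 2)
    (hg_le : ∃ a b, ∀ z, ‖g z‖ ≤ a + b * ‖z‖)
    (hφ : Integrable φ μ) (hφ₂ : Integrable (fun n => ‖n‖ ^ 2 * φ n) μ) :
    HasGradientAt (fun x' => ∫ n, f (x' + σ • n) * φ n ∂μ)
      (∫ n, φ n • g (x + σ • n) ∂μ) x := by
  obtain ⟨a, b, hf_le⟩ := hf_le
  obtain ⟨a', b', hg_le⟩ := hg_le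
  have hf : Continuous f := continuous_iff_continuousAt.2 fun z => (hfg z).continuousAt
  have hshift (x' : E) : Continuous fun n : E => x' + σ • n := by fun_prop
  have hF_int : Integrable (fun n => f (x + σ • n) * φ n) μ := by
    refine ((hφ.norm.const_mul (|a| + 2 * |b| * ‖x‖ ^ 2)).add
      (hφ₂.norm.const_mul (2 * |b| * σ ^ 2))).mono'
      ((hf.comp (hshift x)).aestronglyMeasurable.mul hφ.1) (ae_of_all _ fun n => ?_)
    simp only [Pi.add_apply, norm_mul, norm_pow, Real.norm_eq_abs, abs_norm]
    nlinarith [abs_comp_add_smul_le hf_le x n σ, abs_nonneg (φ n)]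
  have h_diff (n x' : E) : HasFDerivAt (fun w => f (w + σ • n) * φ n)
      (φ n • toDual ℝ E (g (x' + σ • n))) x' := by
    simpa using
      ((hfg _).hasFDerivAt.comp x' ((hasFDerivAt_id x').add_const (σ • n))).mul_const (φ n)
  have h_bound (n x' : E) (hx' : x' ∈ ball x 1) :
      ‖φ n • toDual ℝ E (g (x' + σ • n))‖ ≤
        (|a'| + |b'| * (‖x‖ + 1)) * ‖φ n‖ + |b'| * |σ| * ‖‖n‖ * φ n‖ := by
    simp only [norm_smul, LinearIsometryEquiv.norm_map, norm_mul, norm_norm]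
    nlinarith [norm_comp_add_smul_le hg_le hx' n σ, norm_nonneg (φ n)]
  have hcomm : ∫ n, φ n • toDual ℝ E (g (x + σ • n)) ∂μ
      = toDual ℝ E (∫ n, φ n • g (x + σ • n) ∂μ) := by
    simpa using (toDual ℝ E).toContinuousLinearEquiv.integral_comp_comm
      (μ := μ) (fun n => φ n • g (x + σ • n))
  rw [hasGradientAt_iff_hasFDerivAt, ← hcomm]
  exact hasFDerivAt_integral_of_dominated_of_fderiv_le (ball_mem_nhds x one_pos)
    (Filter.Eventually.of_forall fun x' =>
      (hf.comp (hshift x')).aestronglyMeasurable.mul hφ.1) hF_int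
    (hφ.1.smul ((toDual ℝ E).continuous.comp (hg.comp (hshift x))).aestronglyMeasurable)
    (ae_of_all _ h_bound)
    ((hφ.norm.const_mul _).add ((hφ.norm_mul_of_sq_norm_mul hφ₂).norm.const_mul _))
    (ae_of_all _ fun n x' _ => h_diff n x')

end ParametricIntegral

section GaussianMoments

variable {V : Type*} [NormedAddCommGroup V] [InnerProductSpace ℝ V] [FiniteDimensional ℝ V]
  [MeasurableSpace V] [BorelSpace V]

lemma integrable_exp_neg_mul_sq_norm {c : ℝ} (hc : 0 < c) :
    Integrable fun v : V => exp (-c * ‖v‖ ^ 2) := by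
  refine Integrable.of_integral_ne_zero ?_
  rw [GaussianFourier.integral_rexp_neg_mul_sq_norm hc]
  exact (rpow_pos_of_pos (div_pos pi_pos hc) _).ne'

lemma integrable_sq_norm_mul_exp_neg_mul_sq_norm {c : ℝ} (hc : 0 < c) :
    Integrable fun v : V => ‖v‖ ^ 2 * exp (-c * ‖v‖ ^ 2) := by
  have hcont : Continuous fun v : V => ‖v‖ ^ 2 * exp (-c * ‖v‖ ^ 2) := by fun_prop
  refine ((integrable_exp_neg_mul_sq_norm (half_pos hc)).const_mul (2 / c)).mono'
    hcont.aestronglyMeasurable (ae_of_all _ fun v => ?_)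
  -- half of the exponent absorbs `‖v‖²`, as `t e⁻ᵗ ≤ 1`
  set t := c / 2 * ‖v‖ ^ 2 with ht
  have hmul : t * exp (-t) ≤ 1 :=
    (mul_exp_neg_le_exp_neg_one t).trans (exp_le_one_iff.2 (by norm_num))
  rw [Real.norm_eq_abs, abs_of_nonneg (by positivity)]
  calc ‖v‖ ^ 2 * exp (-c * ‖v‖ ^ 2)
      = 2 / c * (t * exp (-t)) * exp (-(c / 2) * ‖v‖ ^ 2) := by
        rw [ht, show -c * ‖v‖ ^ 2 = -(c / 2 * ‖v‖ ^ 2) + -(c / 2) * ‖v‖ ^ 2 by ring,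
          exp_add]
        field_simp
    _ ≤ 2 / c * 1 * exp (-(c / 2) * ‖v‖ ^ 2) := by gcongr
    _ = 2 / c * exp (-(c / 2) * ‖v‖ ^ 2) := by ring

end GaussianMoments

section NoisedDensity

variable {d N : ℕ} {σ : ℝ}

lemma gaussPdf_eq (d : ℕ) (σ : ℝ) (μ : EuclideanSpace ℝ (Fin d)) :
    gaussPdf d σ μ = fun x =>
      (2 * π * σ ^ 2) ^ (-(d : ℝ) / 2) * exp (-(2 * σ ^ 2)⁻¹ * ‖x - μ‖ ^ 2) := by
  ext x
  unfold gaussPdf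
  congr 2
  ring

lemma continuous_gaussPdf (d : ℕ) (σ : ℝ) (μ : EuclideanSpace ℝ (Fin d)) :
    Continuous (gaussPdf d σ μ) := by
  rw [gaussPdf_eq]
  fun_prop

lemma gaussPdf_nonneg (μ x : EuclideanSpace ℝ (Fin d)) : 0 ≤ gaussPdf d σ μ x := by
  unfold gaussPdf
  positivity

lemma gaussPdf_pos (hσ : σ ≠ 0) (μ x : EuclideanSpace ℝ (Fin d)) :
    0 < gaussPdf d σ μ x := by
  unfold gaussPdf
  positivity

lemma gaussPdf_le (μ x : EuclideanSpace ℝ (Fin d)) :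
    gaussPdf d σ μ x ≤ (2 * π * σ ^ 2) ^ (-(d : ℝ) / 2) := by
  rw [gaussPdf_eq]
  refine mul_le_of_le_one_right (by positivity) (exp_le_one_iff.2 ?_)
  have : 0 ≤ (2 * σ ^ 2)⁻¹ := by positivity
  nlinarith [sq_nonneg ‖x - μ‖]

lemma integrable_gaussPdf (hσ : σ ≠ 0) : Integrable (gaussPdf d σ 0) := by
  rw [gaussPdf_eq]
  simpa using (integrable_exp_neg_mul_sq_norm (V := EuclideanSpace ℝ (Fin d))
    (by positivity : 0 < (2 * σ ^ 2)⁻¹)).const_mul ((2 * π * σ ^ 2) ^ (-(d : ℝ) / 2))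

lemma integrable_sq_norm_mul_gaussPdf (hσ : σ ≠ 0) :
    Integrable fun n => ‖n‖ ^ 2 * gaussPdf d σ 0 n := by
  rw [gaussPdf_eq]
  simpa [mul_left_comm] using (integrable_sq_norm_mul_exp_neg_mul_sq_norm
    (V := EuclideanSpace ℝ (Fin d)) (by positivity : 0 < (2 * σ ^ 2)⁻¹)).const_mul
    ((2 * π * σ ^ 2) ^ (-(d : ℝ) / 2))

lemma hasGradientAt_gaussPdf (μ x : EuclideanSpace ℝ (Fin d)) :
    HasGradientAt (gaussPdf d σ μ) ((σ ^ 2)⁻¹ • gaussPdf d σ μ x • (μ - x)) x := by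
  rw [hasGradientAt_iff_hasFDerivAt, gaussPdf_eq]
  refine ((((hasFDerivAt_id x).sub_const μ).norm_sq.const_mul _).exp.const_mul _).congr_fderiv ?_
  ext v
  simp only [mul_inv_rev, id_eq, neg_mul, map_sub, ContinuousLinearMap.comp_id, neg_smul,
    smul_neg, neg_apply, smul_apply, sub_apply, coe_innerSL_apply, nsmul_eq_mul, Nat.cast_ofNat,
    smul_eq_mul, map_smul, toDual_apply_apply]
  ring

variable (y : Fin N → EuclideanSpace ℝ (Fin d))

lemma sum_gaussPdf_pos (hN : 0 < N) (hσ : σ ≠ 0) (z : EuclideanSpace ℝ (Fin d)) :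
    0 < ∑ i, gaussPdf d σ (y i) z :=
  Finset.sum_pos (fun _ _ => gaussPdf_pos hσ _ _) ⟨⟨0, hN⟩, Finset.mem_univ _⟩

lemma noisedDensity_pos (hN : 0 < N) (hσ : σ ≠ 0) (z : EuclideanSpace ℝ (Fin d)) :
    0 < noisedDensity d N y σ z :=
  mul_pos (by simpa using hN) (sum_gaussPdf_pos y hN hσ z)

lemma denoiser_eq_centerMass (z : EuclideanSpace ℝ (Fin d)) :
    denoiser d N y σ z = Finset.univ.centerMass (fun i => gaussPdf d σ (y i) z) y :=
  rfl

lemma continuous_denoiser (hN : 0 < N) (hσ : σ ≠ 0) : Continuous (denoiser d N y σ) :=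
  ((continuous_finsetSum _ fun i _ => continuous_gaussPdf d σ (y i)).inv₀
      fun z => (sum_gaussPdf_pos y hN hσ z).ne').smul
    (continuous_finsetSum _ fun i _ => (continuous_gaussPdf d σ (y i)).smul continuous_const)

lemma norm_denoiser_le (hN : 0 < N) (hσ : σ ≠ 0) (z : EuclideanSpace ℝ (Fin d)) :
    ‖denoiser d N y σ z‖ ≤ ∑ i, ‖y i‖ := by
  rw [← mem_closedBall_zero_iff, denoiser_eq_centerMass]
  exact (convex_closedBall _ _).centerMass_mem (fun i _ => (gaussPdf_pos hσ _ _).le)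
    (sum_gaussPdf_pos y hN hσ z) fun i _ => mem_closedBall_zero_iff.2 <|
      Finset.single_le_sum (fun j _ => norm_nonneg (y j)) (Finset.mem_univ i)

lemma denoiser_sub_eq (hN : 0 < N) (hσ : σ ≠ 0) (z : EuclideanSpace ℝ (Fin d)) :
    denoiser d N y σ z - z
      = (∑ i, gaussPdf d σ (y i) z)⁻¹ • ∑ i, gaussPdf d σ (y i) z • (y i - z) := by
  simp only [denoiser, smul_sub, Finset.sum_sub_distrib, ← Finset.sum_smul, smul_smul,
    inv_mul_cancel₀ (sum_gaussPdf_pos y hN hσ z).ne', one_smul]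

theorem hasGradientAt_log_noisedDensity (hN : 0 < N) (hσ : σ ≠ 0)
    (z : EuclideanSpace ℝ (Fin d)) :
    HasGradientAt (fun w => log (noisedDensity d N y σ w))
      ((σ ^ 2)⁻¹ • (denoiser d N y σ z - z)) z := by
  have hp : HasFDerivAt (noisedDensity d N y σ) ((1 / (N : ℝ)) • ∑ i,
      toDual ℝ _ ((σ ^ 2)⁻¹ • gaussPdf d σ (y i) z • (y i - z))) z :=
    (HasFDerivAt.fun_sum fun i _ => (hasGradientAt_gaussPdf (y i) z).hasFDerivAt).const_mul _
  rw [hasGradientAt_iff_hasFDerivAt]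
  refine (hp.log (noisedDensity_pos y hN hσ z).ne').congr_fderiv ?_
  rw [← map_sum, ← map_smul, ← map_smul, denoiser_sub_eq y hN hσ, ← Finset.smul_sum,
    smul_smul, noisedDensity]
  simp only [smul_smul]
  congr 2
  field_simp

lemma gradient_log_noisedDensity (hN : 0 < N) (hσ : σ ≠ 0) (z : EuclideanSpace ℝ (Fin d)) :
    gradient (fun w => log (noisedDensity d N y σ w)) z
      = (σ ^ 2)⁻¹ • (denoiser d N y σ z - z) :=
  (hasGradientAt_log_noisedDensity y hN hσ z).gradient

lemma exists_norm_score_le (hN : 0 < N) (hσ : σ ≠ 0) :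
    ∃ a b, ∀ z, ‖(σ ^ 2)⁻¹ • (denoiser d N y σ z - z)‖ ≤ a + b * ‖z‖ := by
  refine ⟨(σ ^ 2)⁻¹ * ∑ i, ‖y i‖, (σ ^ 2)⁻¹, fun z => ?_⟩
  rw [norm_smul, norm_inv, norm_pow, Real.norm_eq_abs, sq_abs, ← mul_add]
  gcongr
  exact (norm_sub_le _ _).trans (add_le_add_left (norm_denoiser_le y hN hσ z) _)

lemma noisedDensity_le (hN : 0 < N) (z : EuclideanSpace ℝ (Fin d)) :
    noisedDensity d N y σ z ≤ (2 * π * σ ^ 2) ^ (-(d : ℝ) / 2) := by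
  have hN' : (N : ℝ) ≠ 0 := by positivity
  calc noisedDensity d N y σ z
      ≤ 1 / N * ∑ _i : Fin N, (2 * π * σ ^ 2) ^ (-(d : ℝ) / 2) := by
        unfold noisedDensity
        gcongr with i
        exact gaussPdf_le _ _
    _ = (2 * π * σ ^ 2) ^ (-(d : ℝ) / 2) := by
        rw [Finset.sum_const, Finset.card_univ, Fintype.card_fin, nsmul_eq_mul]
        field_simp

lemma gaussPdf_div_le_noisedDensity (i : Fin N) (z : EuclideanSpace ℝ (Fin d)) :
    gaussPdf d σ (y i) z / N ≤ noisedDensity d N y σ z := by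
  rw [noisedDensity, div_eq_inv_mul, one_div]
  gcongr
  exact Finset.single_le_sum (fun j _ => gaussPdf_nonneg _ _) (Finset.mem_univ i)

lemma exists_abs_log_noisedDensity_le (hN : 0 < N) (hσ : σ ≠ 0) :
    ∃ a b, ∀ z, |log (noisedDensity d N y σ z)| ≤ a + b * ‖z‖ ^ 2 := by
  set C := (2 * π * σ ^ 2) ^ (-(d : ℝ) / 2)
  set i₀ : Fin N := ⟨0, hN⟩
  have hN' : (0 : ℝ) < N := by exact_mod_cast hN
  refine ⟨|log C| + |log (C / N)| + (σ ^ 2)⁻¹ * ‖y i₀‖ ^ 2, (σ ^ 2)⁻¹,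
    fun z => ?_⟩
  have hupper := log_le_log (noisedDensity_pos y hN hσ z) (noisedDensity_le y hN z)
  have hlower :
      log (C / N) - (2 * σ ^ 2)⁻¹ * ‖z - y i₀‖ ^ 2 ≤ log (noisedDensity d N y σ z) :=
    calc log (C / N) - (2 * σ ^ 2)⁻¹ * ‖z - y i₀‖ ^ 2
        = log (gaussPdf d σ (y i₀) z / N) := by
          rw [gaussPdf_eq, mul_div_right_comm, log_mul (by positivity) (exp_pos _).ne', log_exp]
          ring
      _ ≤ log (noisedDensity d N y σ z) :=
          log_le_log (div_pos (gaussPdf_pos hσ _ _) hN') (gaussPdf_div_le_noisedDensity y i₀ z)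
  have hsq : ‖z - y i₀‖ ^ 2 ≤ 2 * ‖z‖ ^ 2 + 2 * ‖y i₀‖ ^ 2 := by
    simpa [sub_eq_add_neg] using norm_add_sq_le_two_mul z (-y i₀)
  have hσ2 : 0 < σ ^ 2 := by positivity
  have hinv : (2 * σ ^ 2)⁻¹ * 2 = (σ ^ 2)⁻¹ := by field_simp
  rw [abs_le]
  constructor
  · nlinarith [neg_abs_le (log (C / N)), abs_nonneg (log C), inv_pos.2 hσ2,
      sq_nonneg ‖y i₀‖]
  · nlinarith [le_abs_self (log C), abs_nonneg (log (C / N)), inv_pos.2 hσ2,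
      sq_nonneg ‖y i₀‖, sq_nonneg ‖z‖]

end NoisedDensity

/-- Perturb-and-Average Scoring equals the expected score at the perturbed points, which in
turn equals the gradient of the Jensen lower bound `x ↦ 𝔼_n [log p_σ(x + σn)]`. -/
theorem paas_eq_expected_score (d N : ℕ) (hN : 0 < N)
    (y : Fin N → EuclideanSpace ℝ (Fin d)) (σ : ℝ) (hσ : 0 < σ)
    (x : EuclideanSpace ℝ (Fin d)) :
    ((∫ n : EuclideanSpace ℝ (Fin d),
        gaussPdf d 1 0 n •
          ((σ ^ 2)⁻¹ • (denoiser d N y σ (x + σ • n) - (x + σ • n))))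
      = ∫ n : EuclideanSpace ℝ (Fin d),
          gaussPdf d 1 0 n •
            gradient (fun z => Real.log (noisedDensity d N y σ z)) (x + σ • n)) ∧
    ((∫ n : EuclideanSpace ℝ (Fin d),
        gaussPdf d 1 0 n •
          gradient (fun z => Real.log (noisedDensity d N y σ z)) (x + σ • n))
      = gradient (fun x' : EuclideanSpace ℝ (Fin d) =>
          ∫ n : EuclideanSpace ℝ (Fin d),
            Real.log (noisedDensity d N y σ (x' + σ • n)) * gaussPdf d 1 0 n) x) := by
  simp only [gradient_log_noisedDensity y hN hσ.ne', true_and]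
  exact (hasGradientAt_integral_comp_add_smul_mul σ x
    (hasGradientAt_log_noisedDensity y hN hσ.ne')
    (((continuous_denoiser y hN hσ.ne').sub continuous_id).const_smul (σ ^ 2)⁻¹)
    (exists_abs_log_noisedDensity_le y hN hσ.ne') (exists_norm_score_le y hN hσ.ne')
    (integrable_gaussPdf one_ne_zero) (integrable_sq_norm_mul_gaussPdf one_ne_zero)).gradient.symm
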